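/- arXiv:2408.01786 — 2 statements merged into one kernel-verified Lean document; each statement's English description precedes it below -/
import Mathlib

section
/- Let 2<p<4 and β>0. Define g_β(s) = s^{p/2} + (1−s)^{p/2} + 2β s^{p/4}(1−s)^{p/4} for s ∈ [0,1]. Then there exists s_β ∈ (0,1) with g_β(s_β) = max_{s∈[0,1]} g_β(s) and g_β(s_β) > 1. -/
open Real

/-- For `2 < p < 4` and `β > 0`, the function
`g_β(s) = s^(p/2) + (1−s)^(p/2) + 2β s^(p/4)(1−s)^(p/4)` on `[0,1]`
attains its maximum at some `s_β ∈ (0,1)` and the maximal value exceeds `1`. -/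
theorem g_max_interior_gt_one (p β : ℝ) (hp1 : 2 < p) (hp2 : p < 4) (hβ : 0 < β) :
    ∃ sβ ∈ Set.Ioo (0 : ℝ) 1,
      (∀ s ∈ Set.Icc (0 : ℝ) 1,
        s ^ (p / 2) + (1 - s) ^ (p / 2) + 2 * β * s ^ (p / 4) * (1 - s) ^ (p / 4)
          ≤ sβ ^ (p / 2) + (1 - sβ) ^ (p / 2) + 2 * β * sβ ^ (p / 4) * (1 - sβ) ^ (p / 4)) ∧
      1 < sβ ^ (p / 2) + (1 - sβ) ^ (p / 2) + 2 * β * sβ ^ (p / 4) * (1 - sβ) ^ (p / 4) := by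
  set g : ℝ → ℝ := fun s =>
    s ^ (p / 2) + (1 - s) ^ (p / 2) + 2 * β * s ^ (p / 4) * (1 - s) ^ (p / 4) with hg
  have hp0 : 0 < p := by linarith
  -- continuity
  have h2 : Continuous fun s : ℝ => s ^ (p / 2) := Real.continuous_rpow_const (by positivity)
  have h4 : Continuous fun s : ℝ => s ^ (p / 4) := Real.continuous_rpow_const (by positivity)
  have hsub : Continuous fun s : ℝ => (1 : ℝ) - s := continuous_const.sub continuous_id
  have hcont : Continuous g := by
    exact (h2.add (h2.comp hsub)).add
      (((continuous_const.mul h4).mul (h4.comp hsub)))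
  obtain ⟨sβ, hsβ, hmax⟩ :=
    isCompact_Icc.exists_isMaxOn (Set.nonempty_Icc.2 zero_le_one) hcont.continuousOn
  -- the candidate small point
  set c : ℝ := (2 * β / p) ^ (4 / (4 - p)) with hc
  have hc0 : 0 < c := Real.rpow_pos_of_pos (by positivity) _
  set s₀ : ℝ := min (1 / 2) (c / 2) with hs₀
  have hs₀0 : 0 < s₀ := lt_min (by norm_num) (by positivity)
  have hs₀h : s₀ ≤ 1 / 2 := min_le_left _ _
  have hs₀c : s₀ < c := lt_of_le_of_lt (min_le_right _ _) (by linarith)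
  have hs₀mem : s₀ ∈ Set.Icc (0 : ℝ) 1 := ⟨hs₀0.le, by linarith⟩
  -- Bernoulli bound: (1 - s₀)^(p/2) ≥ 1 - (p/2) s₀
  have hA : 1 - p / 2 * s₀ ≤ (1 - s₀) ^ (p / 2) := by
    have := one_add_mul_self_le_rpow_one_add (s := -s₀) (by linarith) (p := p / 2) (by linarith)
    simpa [sub_eq_add_neg, mul_neg] using this
  -- (1 - s₀)^(p/4) ≥ 1/2
  have hB : (1 : ℝ) / 2 ≤ (1 - s₀) ^ (p / 4) := by
    have h1 : ((1 : ℝ) / 2) ^ (p / 4) ≤ (1 - s₀) ^ (p / 4) :=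
      Real.rpow_le_rpow (by norm_num) (by linarith) (by positivity)
    have h2 : ((1 : ℝ) / 2) ^ (1 : ℝ) ≤ ((1 : ℝ) / 2) ^ (p / 4) :=
      Real.rpow_le_rpow_of_exponent_ge (by norm_num) (by norm_num) (by linarith)
    rw [Real.rpow_one] at h2
    linarith
  -- key: β * s₀^(p/4) > (p/2) * s₀
  have hC : p / 2 * s₀ < β * s₀ ^ (p / 4) := by
    have hexp : 0 < 1 - p / 4 := by linarith
    have hlt : s₀ ^ (1 - p / 4) < c ^ (1 - p / 4) :=
      Real.rpow_lt_rpow hs₀0.le hs₀c hexp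
    have hcval : c ^ (1 - p / 4) = 2 * β / p := by
      rw [hc, ← Real.rpow_mul (by positivity),
        show 4 / (4 - p) * (1 - p / 4) = 1 from by
          have h4p : (4:ℝ) - p ≠ 0 := sub_ne_zero.mpr (by linarith)
          field_simp, Real.rpow_one]
    rw [hcval] at hlt
    have hkey : p / 2 * s₀ ^ (1 - p / 4) < β := by
      have := mul_lt_mul_of_pos_left hlt (show (0:ℝ) < p / 2 by linarith)
      calc p / 2 * s₀ ^ (1 - p / 4) < p / 2 * (2 * β / p) := this
        _ = β := by field_simp
    calc p / 2 * s₀ = s₀ ^ (p / 4) * (p / 2 * s₀ ^ (1 - p / 4)) := by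
          rw [show s₀ ^ (p / 4) * (p / 2 * s₀ ^ (1 - p / 4))
              = p / 2 * (s₀ ^ (p / 4) * s₀ ^ (1 - p / 4)) from by ring,
            ← Real.rpow_add hs₀0]
          norm_num
      _ < s₀ ^ (p / 4) * β :=
          mul_lt_mul_of_pos_left hkey (Real.rpow_pos_of_pos hs₀0 _)
      _ = β * s₀ ^ (p / 4) := by ring
  -- hence g s₀ > 1
  have hgs₀ : 1 < g s₀ := by
    have h40 : 0 ≤ s₀ ^ (p / 4) := (Real.rpow_pos_of_pos hs₀0 _).le
    have h20 : 0 ≤ s₀ ^ (p / 2) := (Real.rpow_pos_of_pos hs₀0 _).le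
    have hthird : β * s₀ ^ (p / 4) ≤ 2 * β * s₀ ^ (p / 4) * (1 - s₀) ^ (p / 4) := by
      have : 2 * β * s₀ ^ (p / 4) * (1 / 2) ≤ 2 * β * s₀ ^ (p / 4) * (1 - s₀) ^ (p / 4) :=
        mul_le_mul_of_nonneg_left hB (by positivity)
      linarith
    have hge : 1 - p / 2 * s₀ + β * s₀ ^ (p / 4) ≤ g s₀ := by
      have hrfl : g s₀ = s₀ ^ (p / 2) + (1 - s₀) ^ (p / 2)
          + 2 * β * s₀ ^ (p / 4) * (1 - s₀) ^ (p / 4) := rfl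
      rw [hrfl]; linarith
    exact lt_of_lt_of_le (by linarith) hge
  have hmax' : ∀ s ∈ Set.Icc (0 : ℝ) 1, g s ≤ g sβ := fun s hs => hmax hs
  have hgsβ : 1 < g sβ := lt_of_lt_of_le hgs₀ (hmax' s₀ hs₀mem)
  -- sβ is interior
  have hg0 : g 0 = 1 := by
    simp [hg, Real.zero_rpow (show p / 2 ≠ 0 by positivity),
      Real.zero_rpow (show p / 4 ≠ 0 by positivity)]
  have hg1 : g 1 = 1 := by
    simp [hg, Real.zero_rpow (show p / 2 ≠ 0 by positivity),
      Real.zero_rpow (show p / 4 ≠ 0 by positivity)]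
  refine ⟨sβ, ⟨?_, ?_⟩, hmax', hgsβ⟩
  · rcases lt_or_eq_of_le hsβ.1 with h | h
    · exact h
    · exfalso; rw [← h, hg0] at hgsβ; linarith
  · rcases lt_or_eq_of_le hsβ.2 with h | h
    · exact h
    · exfalso; rw [h, hg1] at hgsβ; linarith
end

section
/- Let 2<p<4 and β ≥ (p−2)/2. Then for the function g_β(s) = s^{p/2} + (1−s)^{p/2} + 2β s^{p/4}(1−s)^{p/4} on [0,1], the maximum is attained at s = 1/2, and g_β(1/2) = 2·(1/2)^{p/2} + 2β(1/2)^{p/2} = 2^{1−p/2}(1+β). -/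
open Real Set

/-- Weighted AM-GM: `t ^ λ ≤ λ t + (1 - λ)` for `t ≥ 0`, `λ ∈ [0,1]`. -/
private lemma amgm {t lam : ℝ} (ht : 0 ≤ t) (h0 : 0 ≤ lam) (h1 : lam ≤ 1) :
    t ^ lam ≤ lam * t + (1 - lam) := by
  have h := Real.geom_mean_le_arith_mean2_weighted h0 (by linarith : (0:ℝ) ≤ 1 - lam)
    ht zero_le_one (by ring)
  simpa using h

/-- Core inequality: for `α ∈ (0,1]` and `t ≥ 1`,
`t^α - 1 ≤ α * t^((α-1)/2) * (t-1)`. -/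
private lemma key3 {α : ℝ} (hα0 : 0 < α) (hα1 : α ≤ 1) {t : ℝ} (ht : 1 ≤ t) :
    t ^ α - 1 ≤ α * t ^ ((α - 1) / 2) * (t - 1) := by
  set e : ℝ := (α - 1) / 2 with he
  set f : ℝ → ℝ := fun t => α * t ^ e * (t - 1) - t ^ α + 1 with hf
  have hderiv : ∀ x : ℝ, 0 < x → HasDerivAt f
      (α * (e * x ^ (e - 1) * (x - 1) + x ^ e) - α * x ^ (α - 1)) x := by
    intro x hx0
    have d1 : HasDerivAt (fun x : ℝ => x ^ e) (e * x ^ (e - 1)) x :=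
      Real.hasDerivAt_rpow_const (Or.inl hx0.ne')
    have d2 : HasDerivAt (fun x : ℝ => x ^ α) (α * x ^ (α - 1)) x :=
      Real.hasDerivAt_rpow_const (Or.inl hx0.ne')
    have d3 : HasDerivAt (fun x : ℝ => x - 1) 1 x := (hasDerivAt_id x).sub_const 1
    have := (((d1.const_mul α).mul d3).sub d2).add_const 1
    convert this using 1
    · rfl
    · rfl
    · rfl
    ring
  have hmono : MonotoneOn f (Ici 1) := by
    apply monotoneOn_of_hasDerivWithinAt_nonneg (convex_Ici 1)
      (fun x hx => (hderiv x (lt_of_lt_of_le one_pos hx)).continuousAt.continuousWithinAt)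
      (fun x hx => by
        rw [interior_Ici] at hx
        exact (hderiv x (lt_trans one_pos hx)).hasDerivWithinAt)
    intro x hx
    rw [interior_Ici] at hx
    have hx1 : (1:ℝ) < x := hx
    have hx0 : (0:ℝ) < x := by linarith
    have h1 : x ^ (α - 1) = x ^ (e - 1) * x ^ ((α + 1) / 2) := by
      rw [← Real.rpow_add hx0, he]; ring_nf
    have h2 : x ^ e = x ^ (e - 1) * x := by
      rw [Real.rpow_sub_one hx0.ne', div_mul_cancel₀ _ hx0.ne']
    have hAM : x ^ ((α + 1) / 2) ≤ (α + 1) / 2 * x + (1 - (α + 1) / 2) :=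
      amgm hx0.le (by linarith) (by linarith)
    have hxe : 0 ≤ x ^ (e - 1) := (Real.rpow_pos_of_pos hx0 _).le
    have hkey : 0 ≤ e * (x - 1) + x - x ^ ((α + 1) / 2) := by
      have h3 : e * (x - 1) + x = (α + 1) / 2 * x + (1 - (α + 1) / 2) := by
        rw [he]; ring
      linarith
    calc (0:ℝ) ≤ α * (x ^ (e - 1) * (e * (x - 1) + x - x ^ ((α + 1) / 2))) := by positivity
      _ = α * (e * x ^ (e - 1) * (x - 1) + x ^ e) - α * x ^ (α - 1) := by
          rw [h1, h2]; ring
  have h0 : f 1 = 0 := by simp [hf]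
  have := hmono (Set.mem_Ici.mpr le_rfl) ht ht
  rw [h0] at this
  simp only [hf] at this
  linarith

/-- `a^α - b^α ≤ α (ab)^((α-1)/2) (a-b)` for `0 < b ≤ a`, `α ∈ (0,1]`. -/
private lemma key2 {α a b : ℝ} (hα0 : 0 < α) (hα1 : α ≤ 1) (hb : 0 < b) (hba : b ≤ a) :
    a ^ α - b ^ α ≤ α * (a * b) ^ ((α - 1) / 2) * (a - b) := by
  have ha : 0 < a := lt_of_lt_of_le hb hba
  set e : ℝ := (α - 1) / 2 with he
  have ht : 1 ≤ a / b := (one_le_div hb).mpr hba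
  have h := key3 hα0 hα1 ht
  have hbe : (0:ℝ) < b ^ e := Real.rpow_pos_of_pos hb _
  have hbα : (0:ℝ) < b ^ α := Real.rpow_pos_of_pos hb _
  have hdiv : (a / b) ^ α = a ^ α / b ^ α := Real.div_rpow ha.le hb.le α
  have hdive : (a / b) ^ e = a ^ e / b ^ e := Real.div_rpow ha.le hb.le e
  have hbsplit : b ^ α = b ^ e * b ^ e * b := by
    rw [← Real.rpow_add hb, ← Real.rpow_add_one hb.ne']
    norm_num [he]
  have hmul : (a * b) ^ e = a ^ e * b ^ e := Real.mul_rpow ha.le hb.le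
  have h' := mul_le_mul_of_nonneg_left h hbα.le
  calc a ^ α - b ^ α = b ^ α * ((a / b) ^ α - 1) := by
        rw [hdiv]; field_simp
    _ ≤ b ^ α * (α * (a / b) ^ e * (a / b - 1)) := h'
    _ = α * (a * b) ^ e * (a - b) := by
        rw [hdive, hmul, hbsplit]; field_simp

/-- For `2 < p < 4` and `β ≥ (p−2)/2`, the function
`g_β(s) = s^(p/2) + (1−s)^(p/2) + 2β s^(p/4)(1−s)^(p/4)` attains its maximum over `[0,1]`
at `s = 1/2`, with value `g_β(1/2) = 2^(1−p/2)(1+β)`. -/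
theorem g_max_at_half (p β : ℝ) (hp1 : 2 < p) (hp2 : p < 4) (hβ : (p - 2) / 2 ≤ β) :
    (∀ s ∈ Set.Icc (0 : ℝ) 1,
      s ^ (p / 2) + (1 - s) ^ (p / 2) + 2 * β * s ^ (p / 4) * (1 - s) ^ (p / 4)
        ≤ (1 / 2 : ℝ) ^ (p / 2) + (1 - 1 / 2 : ℝ) ^ (p / 2)
          + 2 * β * (1 / 2 : ℝ) ^ (p / 4) * (1 - 1 / 2 : ℝ) ^ (p / 4)) ∧
    (1 / 2 : ℝ) ^ (p / 2) + (1 - 1 / 2 : ℝ) ^ (p / 2)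
        + 2 * β * (1 / 2 : ℝ) ^ (p / 4) * (1 - 1 / 2 : ℝ) ^ (p / 4)
      = (2 : ℝ) ^ (1 - p / 2) * (1 + β) := by
  have hα0 : (0:ℝ) < p / 2 - 1 := by linarith
  have hα1 : p / 2 - 1 ≤ 1 := by linarith
  have hβ0 : 0 ≤ β := le_trans (by linarith) hβ
  have hp40 : (0:ℝ) ≤ p / 4 := by linarith
  have hp20 : (0:ℝ) ≤ p / 2 := by linarith
  -- continuity of g
  have hcont : Continuous (fun s : ℝ =>
      s ^ (p/2) + (1-s) ^ (p/2) + 2*β*s^(p/4)*(1-s)^(p/4)) := by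
    have c1 : Continuous (fun s : ℝ => s ^ (p/2)) := Real.continuous_rpow_const hp20
    have c2 : Continuous (fun s : ℝ => (1-s) ^ (p/2)) :=
      (Real.continuous_rpow_const hp20).comp (continuous_const.sub continuous_id)
    have c3 : Continuous (fun s : ℝ => s ^ (p/4)) := Real.continuous_rpow_const hp40
    have c4 : Continuous (fun s : ℝ => (1-s) ^ (p/4)) :=
      (Real.continuous_rpow_const hp40).comp (continuous_const.sub continuous_id)
    exact ((c1.add c2).add (((continuous_const.mul c3)).mul c4))
  -- antitone on [1/2, 1]
  have hanti : AntitoneOn (fun s : ℝ =>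
      s ^ (p/2) + (1-s) ^ (p/2) + 2*β*s^(p/4)*(1-s)^(p/4)) (Icc (1/2:ℝ) 1) := by
    apply antitoneOn_of_hasDerivWithinAt_nonpos (convex_Icc _ _) hcont.continuousOn
      (f' := fun s => (p/2) * ((s^(p/2-1) - (1-s)^(p/2-1))
        - β * (s^(p/4-1) * (1-s)^(p/4-1) * (2*s-1))))
    · intro s hs
      rw [interior_Icc] at hs
      obtain ⟨hs12, hs1⟩ := hs
      have hs0 : (0:ℝ) < s := by linarith
      have h1s : (0:ℝ) < 1 - s := by linarith
      have d1 : HasDerivAt (fun s : ℝ => s ^ (p/2)) (p/2 * s^(p/2-1)) s :=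
        Real.hasDerivAt_rpow_const (Or.inl hs0.ne')
      have dsub : HasDerivAt (fun s : ℝ => 1 - s) (-1) s := by
        simpa using (hasDerivAt_id s).const_sub 1
      have d2 : HasDerivAt (fun s : ℝ => (1-s) ^ (p/2)) (p/2 * (1-s)^(p/2-1) * (-1)) s :=
        (Real.hasDerivAt_rpow_const (p := p/2) (Or.inl h1s.ne')).comp s dsub
      have d3 : HasDerivAt (fun s : ℝ => s ^ (p/4)) (p/4 * s^(p/4-1)) s :=
        Real.hasDerivAt_rpow_const (Or.inl hs0.ne')
      have d4 : HasDerivAt (fun s : ℝ => (1-s) ^ (p/4)) (p/4 * (1-s)^(p/4-1) * (-1)) s :=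
        (Real.hasDerivAt_rpow_const (p := p/4) (Or.inl h1s.ne')).comp s dsub
      have dg := (d1.add d2).add (((d3.const_mul (2*β)).mul d4))
      have hs4 : s ^ (p/4) = s ^ (p/4-1) * s := by
        rw [← Real.rpow_add_one hs0.ne']; norm_num
      have h1s4 : (1-s) ^ (p/4) = (1-s) ^ (p/4-1) * (1-s) := by
        rw [← Real.rpow_add_one h1s.ne']; norm_num
      apply HasDerivAt.hasDerivWithinAt
      convert dg using 1
      · rfl
      rw [hs4, h1s4]; ring
    · intro s hs
      rw [interior_Icc] at hs
      obtain ⟨hs12, hs1⟩ := hs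
      have hs0 : (0:ℝ) < s := by linarith
      have h1s : (0:ℝ) < 1 - s := by linarith
      have hba : 1 - s ≤ s := by linarith
      have hk := key2 hα0 hα1 h1s hba
      have hexp : (p/2 - 1 - 1)/2 = p/4 - 1 := by ring
      have hM : (s * (1-s)) ^ (p/4 - 1) = s ^ (p/4-1) * (1-s) ^ (p/4-1) :=
        Real.mul_rpow hs0.le h1s.le
      rw [hexp, hM] at hk
      have hM0 : 0 ≤ s ^ (p/4-1) * (1-s) ^ (p/4-1) :=
        mul_nonneg (Real.rpow_pos_of_pos hs0 _).le (Real.rpow_pos_of_pos h1s _).le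
      have h2s1 : (0:ℝ) ≤ 2*s - 1 := by linarith
      have hαβ : (p/2 - 1) ≤ β := by linarith [hβ]
      have hmid : (p/2 - 1) * (s ^ (p/4-1) * (1-s) ^ (p/4-1)) * (s - (1-s))
          ≤ β * (s ^ (p/4-1) * (1-s) ^ (p/4-1) * (2*s-1)) := by
        have := mul_le_mul_of_nonneg_right hαβ (mul_nonneg hM0 h2s1)
        calc (p/2 - 1) * (s ^ (p/4-1) * (1-s) ^ (p/4-1)) * (s - (1-s))
            = (p/2 - 1) * (s ^ (p/4-1) * (1-s) ^ (p/4-1) * (2*s-1)) := by ring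
          _ ≤ β * (s ^ (p/4-1) * (1-s) ^ (p/4-1) * (2*s-1)) := this
      have hbr : s ^ (p/2-1) - (1-s) ^ (p/2-1)
          - β * (s ^ (p/4-1) * (1-s) ^ (p/4-1) * (2*s-1)) ≤ 0 := by linarith
      have : (0:ℝ) ≤ p/2 := hp20
      exact mul_nonpos_of_nonneg_of_nonpos this hbr
  -- the bound on [1/2, 1]
  have hb : ∀ s ∈ Icc (1/2:ℝ) 1,
      s ^ (p/2) + (1-s) ^ (p/2) + 2*β*s^(p/4)*(1-s)^(p/4)
        ≤ (1/2:ℝ) ^ (p/2) + (1-1/2:ℝ) ^ (p/2) + 2*β*(1/2:ℝ)^(p/4)*(1-1/2:ℝ)^(p/4) :=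
    fun s hs => hanti (by constructor <;> norm_num) hs hs.1
  constructor
  · intro s hs
    obtain ⟨hs0, hs1⟩ := hs
    rcases le_total (1/2:ℝ) s with h | h
    · exact hb s ⟨h, hs1⟩
    · have := hb (1-s) ⟨by linarith, by linarith⟩
      simp only [sub_sub_cancel] at this
      linarith
  · have h2 : (1:ℝ) - 1/2 = 1/2 := by norm_num
    rw [h2]
    have ha : (1/2:ℝ) ^ (p/4) * (1/2:ℝ) ^ (p/4) = (1/2:ℝ) ^ (p/2) := by
      rw [← Real.rpow_add (by norm_num : (0:ℝ) < 1/2)]; ring_nf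
    have hhalf : (1/2:ℝ) ^ (p/2) = 2 ^ (-(p/2)) := by
      rw [show (1/2:ℝ) = 2⁻¹ by norm_num, Real.inv_rpow (by norm_num : (0:ℝ) ≤ 2),
        ← Real.rpow_neg (by norm_num : (0:ℝ) ≤ 2)]
    have h2p : (2:ℝ) ^ (1 - p/2) = 2 * 2 ^ (-(p/2)) := by
      rw [show (1:ℝ) - p/2 = 1 + -(p/2) by ring, Real.rpow_add (by norm_num : (0:ℝ) < 2),
        Real.rpow_one]
    rw [mul_assoc, ha, hhalf, h2p]
    ring
end
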